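/- arXiv:0901.3015 — 10 statements merged into one kernel-verified Lean document; each statement's English description precedes it below -/
import Mathlib

section
/- Let L be a distributive lattice and p an element of L with set of lower neighbors (elements covered by p) N(p). Then for any two distinct subsets S, S' of N(p), the meet of the elements of S differs from the meet of the elements of S' (where the meet over the empty set is taken to be p). In other words, the map sending a subset S ⊆ N(p) to ⋀{q : q ∈ S} is injective. -/
/-- The meet of the elements of `S`, with the convention that the meet over the
empty set is `p` (realized as the infimum over `insert p S`; when all elements of
`S` lie below `p`, this agrees with the meet over `S` for nonempty `S`). -/
def meetA {L : Type*} [SemilatticeInf L] [DecidableEq L] (p : L) (S : Finset L) : L :=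
  (insert p S).inf' (Finset.insert_nonempty p S) id

lemma mem_of_meetA_le {L : Type*} [DistribLattice L] [DecidableEq L]
    {p q : L} {S : Finset L} (hS : ∀ r ∈ S, r ⋖ p) (hq : q ⋖ p)
    (h : meetA p S ≤ q) : q ∈ S := by
  by_contra hqS
  have key : ∀ r ∈ insert p S, q ⊔ r = p := by
    intro r hr
    rcases Finset.mem_insert.mp hr with rfl | hrS
    · exact sup_eq_right.mpr hq.le
    · have hr := hS r hrS
      have hle : q ⊔ r ≤ p := sup_le hq.le hr.le
      rcases hle.lt_or_eq with hlt | heq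
      · -- q ≤ q ⊔ r < p, q ⋖ p forces q ⊔ r = q, so r ≤ q; then r ⋖ p forces r = q
        have : q ⊔ r = q := by
          by_contra hne
          exact hq.2 (lt_of_le_of_ne le_sup_left (Ne.symm hne)) hlt
        have hrq : r ≤ q := le_sup_right.trans this.le
        have : r = q := by
          by_contra hne
          exact hr.2 (lt_of_le_of_ne hrq hne) hq.lt
        exact (hqS (this ▸ hrS)).elim
      · exact heq
  have : q ⊔ meetA p S = p := by
    rw [meetA, Finset.inf'_sup_distrib_left]
    refine le_antisymm (Finset.inf'_le_of_le _ (Finset.mem_insert_self p S) ?_)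
      (Finset.le_inf' _ _ fun r hr => (key r hr).ge)
    simp [key p (Finset.mem_insert_self p S)]
  have hqp : q = p := by rw [← this, sup_eq_left.mpr h]
  exact absurd hqp hq.lt.ne

/-- In a distributive lattice, for an element `p` and distinct subsets
`S`, `S'` of the set of lower neighbors of `p`, the meets over `S` and `S'` differ. -/
theorem stmt0 {L : Type*} [DistribLattice L] [DecidableEq L]
    (p : L) (S S' : Finset L)
    (hS : ∀ q ∈ S, q ⋖ p) (hS' : ∀ q ∈ S', q ⋖ p) (hne : S ≠ S') :
    meetA p S ≠ meetA p S' := by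
  intro h
  apply hne
  ext q
  constructor
  · intro hqS
    exact mem_of_meetA_le hS' (hS q hqS)
      (h ▸ Finset.inf'_le _ (Finset.mem_insert_of_mem hqS))
  · intro hqS'
    exact mem_of_meetA_le hS (hS' q hqS')
      (h ▸ Finset.inf'_le _ (Finset.mem_insert_of_mem hqS'))
end

section
/- Let L be a finite distributive sublattice of the Boolean lattice of subsets of {1,...,n} (closed under intersection and union). Let p ∈ L with lower-neighbor set N(p). Then for any subsets S ⊆ S' ⊆ N(p), one has |S'| - |S| ≤ |⋀{q : q ∈ S}| - |⋀{q : q ∈ S'}|, where |·| denotes cardinality of the corresponding subset of {1,...,n} and meets are intersections (meet over the empty set is p). -/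
/-- `q` is covered by `p` inside the sublattice `L` of the Boolean lattice of
subsets of `{1,...,n}`: both lie in `L`, `q ⊂ p`, and no element of `L` lies
strictly between them. -/
def CoversIn {n : ℕ} (L : Set (Finset (Fin n))) (q p : Finset (Fin n)) : Prop :=
  q ∈ L ∧ p ∈ L ∧ q ⊂ p ∧ ∀ r ∈ L, q ⊂ r → r ⊂ p → False

/-- Meet (intersection) of the members of `S`, with the convention that the meet
over the empty set is `p`. -/
def meetF {n : ℕ} (p : Finset (Fin n)) (S : Finset (Finset (Fin n))) : Finset (Fin n) :=
  (insert p S).inf id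

lemma meetF_insert {n : ℕ} (p q : Finset (Fin n)) (S : Finset (Finset (Fin n))) :
    meetF p (insert q S) = q ∩ meetF p S := by
  simp only [meetF, Finset.inf_insert, id]
  rw [inf_left_comm]
  rfl

lemma key {n : ℕ} (L : Set (Finset (Fin n)))
    (hLjoin : ∀ a ∈ L, ∀ b ∈ L, a ∪ b ∈ L)
    (p : Finset (Fin n)) (q : Finset (Fin n)) (hq : CoversIn L q p)
    (S : Finset (Finset (Fin n))) (hqS : q ∉ S) (hS : ∀ s ∈ S, CoversIn L s p) :
    q ∪ meetF p S = p := by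
  have : (q : Finset (Fin n)) ⊔ (insert p S).inf id = (insert p S).inf (fun s => q ⊔ s) :=
    Finset.inf_sup_distrib_left _ _ _
  have hall : ∀ s ∈ insert p S, q ⊔ s = p := by
    intro s hs
    rcases Finset.mem_insert.1 hs with rfl | hs
    · exact sup_eq_right.2 hq.2.2.1.subset
    · -- q ∪ s = p since it's in L, between q and p
      have hsc := hS s hs
      have hmem : q ∪ s ∈ L := hLjoin q hq.1 s hsc.1
      have hsub : q ∪ s ⊆ p := Finset.union_subset hq.2.2.1.subset hsc.2.2.1.subset
      by_contra hne
      have hss : q ∪ s ⊂ p := ssubset_of_subset_of_ne hsub hne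
      have hqss : q ⊂ q ∪ s := by
        refine Finset.ssubset_iff_subset_ne.2 ⟨Finset.subset_union_left, ?_⟩
        intro h
        have : s ⊆ q := h ▸ Finset.subset_union_right
        rcases eq_or_ne s q with rfl | hne2
        · exact hqS hs
        · exact hsc.2.2.2 q hq.1 (Finset.ssubset_iff_subset_ne.2 ⟨this, hne2⟩) hq.2.2.1
      exact hq.2.2.2 (q ∪ s) hmem hqss hss
  show q ⊔ meetF p S = p
  rw [meetF, this, Finset.inf_congr rfl hall, Finset.inf_const (Finset.insert_nonempty _ _)]

lemma step {n : ℕ} (L : Set (Finset (Fin n)))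
    (hLjoin : ∀ a ∈ L, ∀ b ∈ L, a ∪ b ∈ L)
    (p : Finset (Fin n)) (q : Finset (Fin n)) (hq : CoversIn L q p)
    (S : Finset (Finset (Fin n))) (hqS : q ∉ S) (hS : ∀ s ∈ S, CoversIn L s p) :
    (meetF p (insert q S)).card + 1 ≤ (meetF p S).card := by
  rw [meetF_insert]
  have hssub : q ∩ meetF p S ⊂ meetF p S := by
    refine Finset.ssubset_iff_subset_ne.2 ⟨Finset.inter_subset_right, ?_⟩
    intro h
    have hsub : meetF p S ⊆ q := by
      intro x hx; have := h ▸ hx; exact (Finset.mem_inter.1 this).1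
    have := key L hLjoin p q hq S hqS hS
    have : p ⊆ q := this ▸ Finset.union_subset (le_refl q) hsub
    exact hq.2.2.1.not_subset this
  exact Finset.card_lt_card hssub

/-- For a finite sublattice `L` of the Boolean lattice on `{1,...,n}`,
`p ∈ L`, and subsets `S ⊆ S'` of the set of lower neighbors of `p`, one has
`|S'| - |S| ≤ |⋀S| - |⋀S'|`, stated equivalently as `|S'| + |⋀S'| ≤ |S| + |⋀S|`. -/
theorem stmt1 {n : ℕ} (L : Set (Finset (Fin n))) (hfin : L.Finite)
    (hLmeet : ∀ a ∈ L, ∀ b ∈ L, a ∩ b ∈ L) (hLjoin : ∀ a ∈ L, ∀ b ∈ L, a ∪ b ∈ L)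
    (p : Finset (Fin n)) (hp : p ∈ L)
    (S S' : Finset (Finset (Fin n))) (hSS' : S ⊆ S')
    (hS' : ∀ q ∈ S', CoversIn L q p) :
    S'.card + (meetF p S').card ≤ S.card + (meetF p S).card := by
  have hgen : ∀ D : Finset (Finset (Fin n)), Disjoint S D →
      (∀ s ∈ S ∪ D, CoversIn L s p) →
      (S ∪ D).card + (meetF p (S ∪ D)).card ≤ S.card + (meetF p S).card := by
    intro D
    induction D using Finset.induction_on with
    | empty => simp
    | @insert a D ha ih =>
      intro hdisj hcov
      have hdisj' : Disjoint S D := hdisj.mono_right (Finset.subset_insert a D)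
      have haS : a ∉ S := fun h => (Finset.disjoint_left.1 hdisj h) (Finset.mem_insert_self a D)
      have haSD : a ∉ S ∪ D := by simp [haS, ha]
      have hrw : S ∪ insert a D = insert a (S ∪ D) := by
        ext x; simp [Finset.mem_insert, or_left_comm, or_comm]
      have hcov' : ∀ s ∈ S ∪ D, CoversIn L s p := fun s hs =>
        hcov s (by rw [hrw]; exact Finset.mem_insert_of_mem hs)
      have hac : CoversIn L a p := hcov a (by rw [hrw]; exact Finset.mem_insert_self _ _)
      have hstep := step L hLjoin p a hac (S ∪ D) haSD hcov'
      have hcard : (S ∪ insert a D).card = (S ∪ D).card + 1 := by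
        rw [hrw, Finset.card_insert_of_notMem haSD]
      calc (S ∪ insert a D).card + (meetF p (S ∪ insert a D)).card
          = (S ∪ D).card + 1 + (meetF p (insert a (S ∪ D))).card := by rw [hcard, hrw]
        _ ≤ (S ∪ D).card + (meetF p (S ∪ D)).card := by omega
        _ ≤ S.card + (meetF p S).card := ih hdisj' hcov'
  have h1 := hgen (S' \ S) (Finset.disjoint_sdiff) (by
    rw [Finset.union_sdiff_of_subset hSS']; exact hS')
  rwa [Finset.union_sdiff_of_subset hSS'] at h1
end

section
/- Let L be a finite distributive lattice and p ∈ L. Every element I of the interval [⋀{q : q ∈ N(p)}, p] is the meet of the set {q ∈ N(p) : I ≤ q}; in particular, every element of this interval is a meet of a (possibly empty) subset of the lower neighbors of p, with the empty meet interpreted as p. -/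
/-- In a finite distributive lattice, let `N` be the set of lower
neighbors of `p`. Every element `I` of the interval `[⋀N, p]` equals the meet of
the set `{q ∈ N : I ≤ q}` (empty meet interpreted as `p`). -/
theorem stmt4 {L : Type*} [DistribLattice L] [Fintype L] [DecidableEq L]
    (p : L) (N : Finset L) (hN : ∀ q, q ∈ N ↔ q ⋖ p)
    (I : L) (hI₁ : meetA p N ≤ I) (hI₂ : I ≤ p)
    (T : Finset L) (hT : ∀ q, q ∈ T ↔ q ∈ N ∧ I ≤ q) :
    I = meetA p T := by
  classical
  have hTN : T ⊆ N := fun q hq => ((hT q).1 hq).1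
  -- I ≤ meetA p T
  have h1 : I ≤ meetA p T := by
    apply Finset.le_inf'
    intro x hx
    rcases Finset.mem_insert.1 hx with rfl | hx
    · exact hI₂
    · exact ((hT x).1 hx).2
  -- I ⊔ meetA p (N \ T) = p
  have h2 : I ⊔ meetA p (N \ T) = p := by
    rw [meetA, Finset.inf'_sup_distrib_left]
    apply le_antisymm
    · exact Finset.inf'_le_of_le _ (Finset.mem_insert_self p _) (sup_le hI₂ le_rfl)
    · apply Finset.le_inf'
      intro q hq
      rcases Finset.mem_insert.1 hq with rfl | hq
      · exact le_sup_right
      · rcases Finset.mem_sdiff.1 hq with ⟨hqN, hqT⟩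
        have hcov : q ⋖ p := (hN q).1 hqN
        have hIq : ¬ I ≤ q := fun h => hqT ((hT q).2 ⟨hqN, h⟩)
        have hlt : q < I ⊔ q := lt_of_le_of_ne le_sup_right
          (fun h => hIq (h ▸ le_sup_left))
        have hle : I ⊔ q ≤ p := sup_le hI₂ hcov.le
        rcases lt_or_eq_of_le hle with h | h
        · exact absurd h (hcov.2 hlt)
        · exact h.ge
  -- meetA p T ⊓ meetA p (N \ T) = meetA p N
  have h3 : meetA p T ⊓ meetA p (N \ T) = meetA p N := by
    rw [meetA, meetA, ← Finset.inf'_union (Finset.insert_nonempty p T)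
      (Finset.insert_nonempty p (N \ T)) id]
    have : insert p T ∪ insert p (N \ T) = insert p N := by
      rw [Finset.insert_union, Finset.union_insert, Finset.insert_idem,
        Finset.union_sdiff_of_subset hTN]
    congr 1
  -- conclude
  have h4 : meetA p T ≤ I := by
    have hMp : meetA p T ≤ p := Finset.inf'_le _ (Finset.mem_insert_self p _)
    calc meetA p T = meetA p T ⊓ (I ⊔ meetA p (N \ T)) := by rw [h2]; exact (inf_eq_left.2 hMp).symm
    _ = (meetA p T ⊓ I) ⊔ (meetA p T ⊓ meetA p (N \ T)) := inf_sup_left _ _ _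
    _ ≤ I ⊔ I := sup_le_sup inf_le_right (h3 ▸ hI₁)
    _ = I := sup_idem I
  exact le_antisymm h1 h4
end

section
/- Let L be a finite distributive lattice and p ∈ L. The map S ↦ [⋀{q : q ∈ S}, p] is a bijection between subsets S of N(p) and those intervals of L with top element p that are isomorphic to Boolean lattices (where the empty set corresponds to the trivial interval [p, p]). -/
/-- The interval `[a, p]` is Boolean: lattice-isomorphic to the lattice of subsets
of a finite set. -/
def IsBooleanInterval {L : Type*} [Lattice L] (a p : L) : Prop :=
  ∃ k : ℕ, Nonempty (↥(Set.Icc a p) ≃o Finset (Fin k))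

section Aux

variable {L : Type*} [DistribLattice L] [DecidableEq L] {p : L}

attribute [local instance] Classical.propDecidable

lemma meetA_le (p : L) (S : Finset L) : meetA p S ≤ p :=
  Finset.inf'_le _ (Finset.mem_insert_self _ _)

lemma meetA_le_of_mem {S : Finset L} {q : L} (h : q ∈ S) : meetA p S ≤ q :=
  Finset.inf'_le _ (Finset.mem_insert_of_mem h)

lemma le_meetA {S : Finset L} {x : L} (hx : x ≤ p) (h : ∀ q ∈ S, x ≤ q) :
    x ≤ meetA p S := by
  apply Finset.le_inf'
  intro r hr
  rcases Finset.mem_insert.mp hr with h1 | h1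
  · simpa [h1] using hx
  · exact h r h1

lemma meetA_empty (p : L) : meetA p (∅ : Finset L) = p := by
  simp [meetA]

/-- Key lemma A: if `S` consists of lower covers of `p` and `⋀S ≤ x ≤ p`, then
`x` is the meet of those elements of `S` above `x`. -/
lemma keyA {N S : Finset L} (hN : ∀ q, q ∈ N ↔ q ⋖ p) (hS : S ⊆ N) {x : L}
    (hax : meetA p S ≤ x) (hxp : x ≤ p) :
    x = meetA p (S.filter (fun q => x ≤ q)) := by
  apply le_antisymm
  · exact le_meetA hxp (fun q hq => (Finset.mem_filter.mp hq).2)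
  · have hdist : x ⊔ meetA p S =
        (insert p S).inf' (Finset.insert_nonempty p S) (fun q => x ⊔ q) := by
      simpa [meetA] using
        Finset.inf'_sup_distrib_left (Finset.insert_nonempty p S) (id : L → L) x
    have h1 : meetA p (S.filter (fun q => x ≤ q)) ≤ x ⊔ meetA p S := by
      rw [hdist]
      apply Finset.le_inf'
      intro r hr
      rcases Finset.mem_insert.mp hr with h1 | h1
      · subst h1
        exact le_trans (meetA_le _ _) le_sup_right
      · by_cases hxr : x ≤ r
        · exact le_trans (meetA_le_of_mem (Finset.mem_filter.mpr ⟨h1, hxr⟩))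
            le_sup_right
        · have hr' : r ⋖ p := (hN r).mp (hS h1)
          have : x ⊔ r = r ∨ x ⊔ r = p := hr'.eq_or_eq le_sup_right (sup_le hxp hr'.lt.le)
          rcases this with h2 | h2
          · exact absurd (le_sup_left.trans h2.le) hxr
          · rw [h2]; exact meetA_le _ _
    calc meetA p (S.filter (fun q => x ≤ q)) ≤ x ⊔ meetA p S := h1
      _ = x := sup_eq_left.mpr hax

/-- Key lemma B: if `U` consists of lower covers of `p`, `q` is a lower cover of `p`,
and `⋀U ≤ q`, then `q ∈ U`. -/
lemma keyB {N U : Finset L} (hN : ∀ q, q ∈ N ↔ q ⋖ p) (hU : U ⊆ N) {q : L}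
    (hq : q ∈ N) (h : meetA p U ≤ q) : q ∈ U := by
  have hqp : q ⋖ p := (hN q).mp hq
  have hA := keyA hN hU h hqp.lt.le
  by_cases hF : (U.filter (fun r => q ≤ r)).Nonempty
  · obtain ⟨r, hr⟩ := hF
    obtain ⟨hrU, hqr⟩ := Finset.mem_filter.mp hr
    have hrp : r ⋖ p := (hN r).mp (hU hrU)
    have : r = q ∨ r = p := hqp.eq_or_eq hqr hrp.lt.le
    rcases this with h2 | h2
    · exact h2 ▸ hrU
    · exact absurd h2 hrp.lt.ne
  · rw [Finset.not_nonempty_iff_eq_empty.mp hF, meetA_empty] at hA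
    exact absurd hA hqp.lt.ne

/-- For `q` a lower cover of `p` and `S ⊆ N`: `q ∈ S ↔ ⋀S ≤ q`. -/
lemma mem_iff_meetA_le {N S : Finset L} (hN : ∀ q, q ∈ N ↔ q ⋖ p) (hS : S ⊆ N)
    {q : L} (hq : q ∈ N) : q ∈ S ↔ meetA p S ≤ q :=
  ⟨meetA_le_of_mem, keyB hN hS hq⟩

end Aux

/-- In a finite distributive lattice `L` with `p ∈ L` and `N` the set
of lower neighbors of `p`, the map `S ↦ [⋀S, p]` is a bijection between subsets `S`
of `N` and the Boolean intervals of `L` with top element `p`: every `⋀S` gives a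
Boolean interval, the map `S ↦ ⋀S` is injective on subsets of `N`, and every
Boolean interval `[a,p]` arises this way. -/
theorem stmt5 {L : Type*} [DistribLattice L] [Fintype L] [DecidableEq L]
    (p : L) (N : Finset L) (hN : ∀ q, q ∈ N ↔ q ⋖ p) :
    (∀ S ⊆ N, meetA p S ≤ p ∧ IsBooleanInterval (meetA p S) p) ∧
    (∀ S ⊆ N, ∀ S' ⊆ N, meetA p S = meetA p S' → S = S') ∧
    (∀ a : L, a ≤ p → IsBooleanInterval a p → ∃ S ⊆ N, meetA p S = a) := by
  classical
  refine ⟨?_, ?_, ?_⟩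
  · -- every `⋀S` is ≤ p and gives a Boolean interval
    intro S hS
    refine ⟨meetA_le p S, S.card, ⟨?_⟩⟩
    set a := meetA p S with ha
    set k := S.card
    set e : Fin k → L := fun i => (S.equivFin.symm i : L) with he
    have he_mem : ∀ i, e i ∈ S := fun i => (S.equivFin.symm i).2
    have he_inj : Function.Injective e := fun i j hij => by
      apply S.equivFin.symm.injective
      exact Subtype.ext hij
    have he_surj : ∀ q ∈ S, ∃ i, e i = q := by
      intro q hq
      exact ⟨S.equivFin ⟨q, hq⟩, by simp [he]⟩
    -- the forward map
    set F : ↥(Set.Icc a p) → Finset (Fin k) :=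
      fun x => Finset.univ.filter (fun i => ¬ (x : L) ≤ e i) with hF
    -- the inverse map
    have hGmem : ∀ T : Finset (Fin k),
        meetA p ((Finset.univ \ T).image e) ∈ Set.Icc a p := by
      intro T
      constructor
      · apply le_meetA (meetA_le p S)
        intro q hq
        obtain ⟨i, _, rfl⟩ := Finset.mem_image.mp hq
        exact meetA_le_of_mem (he_mem i)
      · exact meetA_le _ _
    set G : Finset (Fin k) → ↥(Set.Icc a p) :=
      fun T => ⟨meetA p ((Finset.univ \ T).image e), hGmem T⟩ with hG
    -- image identity: the filtered image equals the filter of S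
    have himg : ∀ x : L, (Finset.univ.filter (fun i => x ≤ e i)).image e
        = S.filter (fun q => x ≤ q) := by
      intro x
      ext q
      simp only [Finset.mem_image, Finset.mem_filter, Finset.mem_univ, true_and]
      constructor
      · rintro ⟨i, hi, rfl⟩
        exact ⟨he_mem i, hi⟩
      · rintro ⟨hqS, hxq⟩
        obtain ⟨i, rfl⟩ := he_surj q hqS
        exact ⟨i, hxq, rfl⟩
    have hGF : ∀ x, G (F x) = x := by
      intro x
      apply Subtype.ext
      have hcompl : Finset.univ \ F x = Finset.univ.filter (fun i => (x : L) ≤ e i) := by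
        ext i
        simp [hF, Finset.mem_sdiff]
      show meetA p ((Finset.univ \ F x).image e) = (x : L)
      rw [hcompl, himg]
      exact (keyA hN hS x.2.1 x.2.2).symm
    have hFG : ∀ T, F (G T) = T := by
      intro T
      ext i
      simp only [hF, Finset.mem_filter, Finset.mem_univ, true_and]
      constructor
      · intro hni
        by_contra hiT
        exact hni (meetA_le_of_mem (Finset.mem_image.mpr
          ⟨i, Finset.mem_sdiff.mpr ⟨Finset.mem_univ i, hiT⟩, rfl⟩))
      · intro hiT hle
        -- `⋀U ≤ e i` with `e i` a cover, so `e i ∈ U`, contradiction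
        have hU : (Finset.univ \ T).image e ⊆ N := by
          intro q hq
          obtain ⟨j, _, rfl⟩ := Finset.mem_image.mp hq
          exact hS (he_mem j)
        have := keyB hN hU (hS (he_mem i)) hle
        obtain ⟨j, hj, hji⟩ := Finset.mem_image.mp this
        have : j = i := he_inj hji
        subst this
        exact (Finset.mem_sdiff.mp hj).2 hiT
    refine ⟨⟨F, G, hGF, hFG⟩, ?_⟩
    · -- map_rel_iff'
      intro x y
      show F x ⊆ F y ↔ x ≤ y
      constructor
      · intro hsub
        have hy := keyA hN hS y.2.1 y.2.2
        have hxy : (x : L) ≤ (y : L) := by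
          rw [hy]
          apply le_meetA x.2.2
          intro q hq
          obtain ⟨hqS, hyq⟩ := Finset.mem_filter.mp hq
          by_contra hxq
          obtain ⟨i, rfl⟩ := he_surj q hqS
          have hiFx : i ∈ F x := by simp [hF, hxq]
          have := Finset.mem_filter.mp (hsub hiFx)
          exact this.2 hyq
        exact hxy
      · intro hxy i hi
        simp only [hF, Finset.mem_filter, Finset.mem_univ, true_and] at hi ⊢
        intro hyi
        exact hi (le_trans hxy hyi)
  · -- injectivity
    intro S hS S' hS' h
    ext q
    by_cases hq : q ∈ N
    · rw [mem_iff_meetA_le hN hS hq, mem_iff_meetA_le hN hS' hq, h]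
    · constructor
      · intro h'; exact absurd (hS h') hq
      · intro h'; exact absurd (hS' h') hq
  · -- surjectivity
    rintro a hap ⟨k, ⟨f⟩⟩
    -- elements of the interval corresponding to the coatoms of `Finset (Fin k)`
    set c : Fin k → ↥(Set.Icc a p) := fun i => f.symm (Finset.univ.erase i) with hc
    have hptop : ∀ x : ↥(Set.Icc a p), x ≤ ⟨p, ⟨hap, le_refl p⟩⟩ := fun x => x.2.2
    have hcp : ∀ i, (c i : L) ⋖ p := by
      intro i
      have h1 : Finset.univ.erase i ⋖ (Finset.univ : Finset (Fin k)) :=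
        Finset.erase_covBy (Finset.mem_univ i)
      have h2 : c i ⋖ f.symm Finset.univ := by
        rw [← apply_covBy_apply_iff f.symm] at h1
        exact h1
      have h3 : f.symm Finset.univ = ⟨p, ⟨hap, le_refl p⟩⟩ := by
        apply le_antisymm
        · exact Subtype.coe_le_coe.mp ((f.symm Finset.univ).2.2)
        · rw [← f.le_iff_le]
          simp only [OrderIso.apply_symm_apply]
          exact Finset.subset_univ _
      rw [h3] at h2
      -- transfer the covering from the interval to `L`
      constructor
      · exact Subtype.coe_lt_coe.mpr h2.lt
      · intro z hz1 hz2
        have hzmem : z ∈ Set.Icc a p := ⟨le_trans (c i).2.1 hz1.le, hz2.le⟩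
        have hlt1 : c i < (⟨z, hzmem⟩ : ↥(Set.Icc a p)) := Subtype.coe_lt_coe.mp hz1
        have hlt2 : (⟨z, hzmem⟩ : ↥(Set.Icc a p)) < ⟨p, ⟨hap, le_refl p⟩⟩ :=
          Subtype.coe_lt_coe.mp hz2
        exact h2.2 hlt1 hlt2
    set S : Finset L := Finset.univ.image (fun i => (c i : L)) with hSdef
    have hSN : S ⊆ N := by
      intro q hq
      obtain ⟨i, _, rfl⟩ := Finset.mem_image.mp hq
      exact (hN _).mpr (hcp i)
    refine ⟨S, hSN, ?_⟩
    apply le_antisymm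
    · -- meetA p S ≤ a
      have hb : meetA p S ∈ Set.Icc a p := by
        constructor
        · apply le_meetA hap
          intro q hq
          obtain ⟨i, _, rfl⟩ := Finset.mem_image.mp hq
          exact (c i).2.1
        · exact meetA_le _ _
      have hfb : f ⟨meetA p S, hb⟩ = (∅ : Finset (Fin k)) := by
        rw [Finset.eq_empty_iff_forall_notMem]
        intro i hi
        have hle : (⟨meetA p S, hb⟩ : ↥(Set.Icc a p)) ≤ c i := by
          apply Subtype.coe_le_coe.mp
          exact meetA_le_of_mem (Finset.mem_image.mpr ⟨i, Finset.mem_univ i, rfl⟩)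
        have : f ⟨meetA p S, hb⟩ ⊆ f (c i) := f.monotone hle
        have hfc : f (c i) = Finset.univ.erase i := by
          simp [hc]
        rw [hfc] at this
        exact (Finset.mem_erase.mp (this hi)).1 rfl
      have hfa : (⟨meetA p S, hb⟩ : ↥(Set.Icc a p)) ≤ ⟨a, ⟨le_refl a, hap⟩⟩ := by
        rw [← f.le_iff_le, hfb]
        exact Finset.empty_subset _
      exact hfa
    · -- a ≤ meetA p S
      apply le_meetA hap
      intro q hq
      obtain ⟨i, _, rfl⟩ := Finset.mem_image.mp hq
      exact (c i).2.1
end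

section
/- Let L be a finite distributive lattice, p ∈ L, S ⊆ N(p), and q ∈ S. Then the set q ∧ (S \ {q}) := {q ∧ r : r ∈ S, r ≠ q} is a subset of N(q), the set of lower neighbors of q, and the map r ↦ q ∧ r is injective on S \ {q}. -/
/-- In a finite distributive lattice, let `S` be a subset of the lower
neighbors of `p` and `q ∈ S`. Then every `q ⊓ r` with `r ∈ S \ {q}` is a lower
neighbor of `q`, and the map `r ↦ q ⊓ r` is injective on `S \ {q}`. -/
theorem stmt9 {L : Type*} [DistribLattice L] [Fintype L] [DecidableEq L]
    (p : L) (S : Finset L) (hS : ∀ r ∈ S, r ⋖ p) (q : L) (hq : q ∈ S) :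
    (∀ r ∈ S, r ≠ q → (q ⊓ r) ⋖ q) ∧
    Set.InjOn (fun r => q ⊓ r) {r : L | r ∈ S ∧ r ≠ q} := by
  have hqp := hS q hq
  have hsup : ∀ r ∈ S, r ≠ q → q ⊔ r = p := by
    intro r hr hne
    have hrp := hS r hr
    rcases hqp.eq_or_eq (le_sup_left (b := r)) (sup_le hqp.le hrp.le) with h | h
    · exfalso
      have hle : r ≤ q := by simpa [sup_eq_left] using h
      have hlt : r < q := lt_of_le_of_ne hle hne
      exact hrp.2 hlt hqp.1
    · exact h
  constructor
  · intro r hr hne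
    have hsup' : q ⊔ r = p := hsup r hr hne
    have : q ⋖ q ⊔ r := by rw [hsup']; exact hqp
    have := inf_covBy_of_covBy_sup_of_covBy_sup_left this (by rw [hsup']; exact hS r hr)
    exact this
  · intro r hr r' hr' h
    simp only [Set.mem_setOf_eq] at hr hr'
    refine eq_of_inf_eq_sup_eq (a := q) ?_ ?_
    · simpa [inf_comm] using h
    · rw [sup_comm, hsup r hr.1 hr.2, sup_comm, hsup r' hr'.1 hr'.2]
end

section
/- Let L be a finite sublattice of the Boolean lattice of subsets of {1,...,n} containing ∅ and {1,...,n}. For p ∈ L and S ⊆ N(p), define the monomial degree d(p,S) = |p| + n - |⋀{r : r ∈ S}| (with ⋀ over the empty set equal to p). Then for any S ⊆ N(p), d(p,S) - |S| ≤ d(p,N(p)) - |N(p)|; that is, |p| - |S| - |⋀S| attains its maximum over subsets of N(p) at S = N(p). -/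
/-- Let `L` be a finite sublattice of the Boolean lattice on `{1,...,n}`
containing `∅` and `{1,...,n}`. For `p ∈ L` and `S ⊆ N(p)`, with
`d(p,S) = |p| + n - |⋀S|`, one has `d(p,S) - |S| ≤ d(p,N(p)) - |N(p)|`. -/
theorem stmt11 {n : ℕ} (L : Set (Finset (Fin n))) (hfin : L.Finite)
    (hLmeet : ∀ a ∈ L, ∀ b ∈ L, a ∩ b ∈ L) (hLjoin : ∀ a ∈ L, ∀ b ∈ L, a ∪ b ∈ L)
    (hbot : (∅ : Finset (Fin n)) ∈ L) (htop : (Finset.univ : Finset (Fin n)) ∈ L)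
    (p : Finset (Fin n)) (hp : p ∈ L)
    (Np : Finset (Finset (Fin n))) (hNp : ∀ q, q ∈ Np ↔ CoversIn L q p)
    (S : Finset (Finset (Fin n))) (hS : S ⊆ Np) :
    ((p.card : ℤ) + n - (meetF p S).card) - S.card
      ≤ ((p.card : ℤ) + n - (meetF p Np).card) - Np.card := by
  have key : ∀ k (S : Finset (Finset (Fin n))), S ⊆ Np → (Np \ S).card = k →
      (meetF p Np).card + Np.card ≤ (meetF p S).card + S.card := by
    intro k
    induction k with
    | zero =>
      intro S hSsub h0
      have hdiff : Np \ S = ∅ := Finset.card_eq_zero.mp h0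
      have : Np ⊆ S := fun x hx => by
        by_contra hxs
        exact absurd (Finset.mem_sdiff.mpr ⟨hx, hxs⟩) (by simp [hdiff])
      have hEq : S = Np := Finset.Subset.antisymm hSsub this
      simp [hEq]
    | succ k ih =>
      intro S hSsub hcard
      have hne : (Np \ S).Nonempty := Finset.card_pos.mp (by omega)
      obtain ⟨q, hq⟩ := hne
      have hqNp : q ∈ Np := (Finset.mem_sdiff.mp hq).1
      have hqS : q ∉ S := (Finset.mem_sdiff.mp hq).2
      have hcov : CoversIn L q p := (hNp q).mp hqNp
      have hmeet_le_p : meetF p S ⊆ p :=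
        Finset.le_iff_subset.mp (Finset.inf_le (Finset.mem_insert_self p S))
      -- join of distinct covers is p
      have hjoin : ∀ r ∈ S, q ∪ r = p := by
        intro r hr
        have hcr : CoversIn L r p := (hNp r).mp (hSsub hr)
        have hmem : q ∪ r ∈ L := hLjoin q hcov.1 r hcr.1
        have hsub : q ∪ r ⊆ p :=
          Finset.union_subset hcov.2.2.1.subset hcr.2.2.1.subset
        by_contra hne'
        have hss : q ∪ r ⊂ p :=
          ⟨hsub, fun h => hne' (Finset.Subset.antisymm hsub h)⟩
        have hqss : q ⊂ q ∪ r := by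
          refine ⟨Finset.subset_union_left, fun h => ?_⟩
          have hrq : r ⊆ q := (Finset.union_subset_iff.mp h).2
          have hrq' : r ⊂ q := ⟨hrq, fun h' => hqS (by
            have : r = q := Finset.Subset.antisymm hrq h'
            exact this ▸ hr)⟩
          exact hcr.2.2.2 q hcov.1 hrq' hcov.2.2.1
        exact hcov.2.2.2 (q ∪ r) hmem hqss hss
      -- p \ q ⊆ meetF p S
      have hdiffsub : p \ q ⊆ meetF p S := by
        rw [← Finset.le_iff_subset]
        apply Finset.le_inf
        intro r hr
        rcases Finset.mem_insert.mp hr with h | h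
        · subst h; exact Finset.sdiff_subset
        · have := hjoin r h
          intro x hx
          have hxp : x ∈ p := (Finset.mem_sdiff.mp hx).1
          have hxq : x ∉ q := (Finset.mem_sdiff.mp hx).2
          have : x ∈ q ∪ r := this ▸ hxp
          simp only [Finset.mem_union] at this
          exact (this.resolve_left hxq : x ∈ id r)
      have hunion : q ∪ meetF p S = p := by
        apply Finset.Subset.antisymm
        · exact Finset.union_subset hcov.2.2.1.subset hmeet_le_p
        · intro x hx
          by_cases hxq : x ∈ q
          · exact Finset.mem_union_left _ hxq
          · exact Finset.mem_union_right _ (hdiffsub (Finset.mem_sdiff.mpr ⟨hx, hxq⟩))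
      -- meetF p (insert q S) = q ∩ meetF p S
      have hmeet_insert : meetF p (insert q S) = q ∩ meetF p S := by
        unfold meetF
        rw [Finset.insert_comm, Finset.inf_insert]
        simp [Finset.inf_eq_inter]
      -- strict drop
      have hstrict : (q ∩ meetF p S).card < (meetF p S).card := by
        apply Finset.card_lt_card
        refine ⟨Finset.inter_subset_right, fun h => ?_⟩
        have hms : meetF p S ⊆ q := fun x hx => (Finset.mem_inter.mp (h hx)).1
        have : q = p := by
          rw [← hunion, Finset.union_eq_left.mpr hms]
        exact hcov.2.2.1.ne this
      have hsub' : insert q S ⊆ Np := Finset.insert_subset hqNp hSsub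
      have hcard' : (Np \ insert q S).card = k := by
        rw [Finset.sdiff_insert, Finset.card_erase_of_mem hq, hcard]
        omega
      have hih := ih (insert q S) hsub' hcard'
      rw [hmeet_insert] at hih
      rw [Finset.card_insert_of_notMem hqS] at hih
      omega
  have h := key _ S hS rfl
  have hcS : S.card ≤ Np.card := Finset.card_le_card hS
  omega
end

section
/- Every unmixed bipartite graph G without isolated vertices and with bipartition (X, Y) satisfies |X| = |Y| and has a perfect matching; in particular one can label X = {x₁,...,x_n} and Y = {y₁,...,y_n} so that {x_i, y_i} is an edge of G for all i. -/
/-- `C` is a vertex cover of `G`: every edge has at least one endpoint in `C`. -/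
def IsVertexCover {V : Type*} (G : SimpleGraph V) (C : Finset V) : Prop :=
  ∀ a b : V, G.Adj a b → a ∈ C ∨ b ∈ C

/-- `C` is a minimal vertex cover of `G`. -/
def IsMinimalVertexCover {V : Type*} (G : SimpleGraph V) (C : Finset V) : Prop :=
  IsVertexCover G C ∧ ∀ C' ⊂ C, ¬ IsVertexCover G C'

/-!
In a bipartite graph without isolated vertices each side of the bipartition is a minimal vertex
cover, so unmixedness gives `|X| = |Y|` and, more strongly, that every vertex cover has at least
`|X|` vertices. For `S ⊆ X` the set `(X \ S) ∪ N(S)` is a vertex cover, whence `|S| ≤ |N(S)|`;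
by symmetry the same holds inside `Y`, so Hall's condition holds for every set of vertices and
Hall's marriage theorem produces a perfect matching.
-/

section

variable {V : Type*} {G : SimpleGraph V}

def IsUnmixed (G : SimpleGraph V) : Prop :=
  ∀ C C' : Finset V, IsMinimalVertexCover G C → IsMinimalVertexCover G C' → C.card = C'.card

theorem IsVertexCover.exists_isMinimalVertexCover_subset {C : Finset V}
    (hC : IsVertexCover G C) : ∃ D ⊆ C, IsMinimalVertexCover G D := by
  induction C using Finset.strongInductionOn with
  | _ C ih =>
    by_cases hsmaller : ∃ C' ⊂ C, IsVertexCover G C'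
    · obtain ⟨C', hC'C, hC'⟩ := hsmaller
      obtain ⟨D, hDC', hD⟩ := ih C' hC'C hC'
      exact ⟨D, hDC'.trans hC'C.subset, hD⟩
    · exact ⟨C, subset_rfl, hC, fun C' hC'C hC' => hsmaller ⟨C', hC'C, hC'⟩⟩

theorem IsVertexCover.isMinimalVertexCover {C : Finset V} (hC : IsVertexCover G C)
    (hC_nbr : ∀ x ∈ C, ∃ w ∉ C, G.Adj x w) : IsMinimalVertexCover G C := by
  refine ⟨hC, fun C' hC'C hC' => ?_⟩
  obtain ⟨x, hxC, hxC'⟩ := Finset.exists_of_ssubset hC'C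
  obtain ⟨w, hwC, hxw⟩ := hC_nbr x hxC
  exact (hC' x w hxw).elim hxC' fun hwC' => hwC (hC'C.subset hwC')

theorem IsUnmixed.card_le_card {X C : Finset V} (hG : IsUnmixed G)
    (hX : IsMinimalVertexCover G X) (hC : IsVertexCover G C) : X.card ≤ C.card := by
  obtain ⟨D, hDC, hD⟩ := hC.exists_isMinimalVertexCover_subset
  exact (hG X D hX hD).le.trans (Finset.card_le_card hDC)

namespace SimpleGraph.IsBipartiteWith

variable {X Y : Finset V}

theorem isVertexCover_left (hG : G.IsBipartiteWith X Y) : _root_.IsVertexCover G X := by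
  intro a b hab
  rcases hG.mem_of_adj hab with ⟨ha, -⟩ | ⟨-, hb⟩
  · exact .inl ha
  · exact .inr hb

theorem isMinimalVertexCover_left (hG : G.IsBipartiteWith X Y) (hX : ∀ x ∈ X, ∃ w, G.Adj x w) :
    IsMinimalVertexCover G X := by
  refine hG.isVertexCover_left.isMinimalVertexCover fun x hx => ?_
  obtain ⟨w, hxw⟩ := hX x hx
  exact ⟨w, Set.disjoint_right.mp hG.disjoint (hG.mem_of_mem_adj hx hxw), hxw⟩

theorem ncard_le_ncard_iUnion_neighborSet_left [Finite V] (hG : G.IsBipartiteWith X Y)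
    (hX : ∀ C : Finset V, _root_.IsVertexCover G C → X.card ≤ C.card) :
    ∀ S ⊆ (X : Set V), S.ncard ≤ (⋃ x ∈ S, G.neighborSet x).ncard := by
  intro S hS
  set N := ⋃ x ∈ S, G.neighborSet x
  have hcover : _root_.IsVertexCover G (Set.toFinite ((X \ S) ∪ N : Set V)).toFinset := by
    intro a b hab
    simp only [Set.Finite.mem_toFinset, Set.mem_union, Set.mem_sdiff, N, Set.mem_iUnion,
      mem_neighborSet, exists_prop]
    rcases hG.mem_of_adj hab with ⟨ha, -⟩ | ⟨-, hb⟩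
    · by_cases haS : a ∈ S
      · exact .inr (.inr ⟨a, haS, hab⟩)
      · exact .inl (.inl ⟨ha, haS⟩)
    · by_cases hbS : b ∈ S
      · exact .inl (.inr ⟨b, hbS, hab.symm⟩)
      · exact .inr (.inl ⟨hb, hbS⟩)
  have hcard : X.card ≤ ((X \ S) ∪ N : Set V).ncard := by
    rw [Set.ncard_eq_toFinset_card]
    exact hX _ hcover
  have hunion := Set.ncard_union_le (X \ S : Set V) N
  rw [Set.ncard_sdiff hS, Set.ncard_coe_finset] at hunion
  have hSX : S.ncard ≤ X.card := Set.ncard_coe_finset X ▸ Set.ncard_le_ncard hS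
  omega

variable {s t : Set V}

theorem forall_ncard_le_ncard_iUnion_neighborSet [Finite V] (hG : G.IsBipartiteWith s t)
    (hst : s ∪ t = Set.univ) (hs : ∀ u ⊆ s, u.ncard ≤ (⋃ x ∈ u, G.neighborSet x).ncard)
    (ht : ∀ u ⊆ t, u.ncard ≤ (⋃ x ∈ u, G.neighborSet x).ncard) (u : Set V) :
    u.ncard ≤ (⋃ x ∈ u, G.neighborSet x).ncard := by
  have hu : u = (u ∩ s) ∪ (u ∩ t) := by rw [← Set.inter_union_distrib_left, hst, Set.inter_univ]
  have hN_disj : Disjoint (⋃ x ∈ u ∩ s, G.neighborSet x) (⋃ x ∈ u ∩ t, G.neighborSet x) :=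
    hG.disjoint.symm.mono
      (Set.iUnion₂_subset fun _ hx => isBipartiteWith_neighborSet_subset hG hx.2)
      (Set.iUnion₂_subset fun _ hx => isBipartiteWith_neighborSet_subset hG.symm hx.2)
  calc u.ncard = (u ∩ s).ncard + (u ∩ t).ncard := by
        conv_lhs => rw [hu]
        exact Set.ncard_union_eq <|
          hG.disjoint.mono Set.inter_subset_right Set.inter_subset_right
    _ ≤ (⋃ x ∈ u ∩ s, G.neighborSet x).ncard + (⋃ x ∈ u ∩ t, G.neighborSet x).ncard :=
        add_le_add (hs _ Set.inter_subset_right) (ht _ Set.inter_subset_right)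
    _ = ((⋃ x ∈ u ∩ s, G.neighborSet x) ∪ ⋃ x ∈ u ∩ t, G.neighborSet x).ncard :=
        (Set.ncard_union_eq hN_disj).symm
    _ ≤ (⋃ x ∈ u, G.neighborSet x).ncard := by
        refine Set.ncard_le_ncard (Set.union_subset ?_ ?_) <;>
          exact Set.biUnion_subset_biUnion_left Set.inter_subset_left

end SimpleGraph.IsBipartiteWith

end

/-- Every unmixed bipartite graph `G` without isolated vertices and
with bipartition `(X, Y)` satisfies `|X| = |Y|` and has a perfect matching. -/
theorem stmt13 {V : Type*} [Fintype V] [DecidableEq V] (G : SimpleGraph V)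
    (X Y : Finset V) (hdisj : Disjoint X Y) (hcover : X ∪ Y = Finset.univ)
    (hbip : ∀ a b : V, G.Adj a b → (a ∈ X ∧ b ∈ Y) ∨ (a ∈ Y ∧ b ∈ X))
    (hnoiso : ∀ v : V, ∃ w : V, G.Adj v w)
    (hunmixed : ∀ C C' : Finset V,
      IsMinimalVertexCover G C → IsMinimalVertexCover G C' → C.card = C'.card) :
    X.card = Y.card ∧ ∃ M : G.Subgraph, M.IsPerfectMatching := by
  classical
  have hG : G.IsBipartiteWith X Y := ⟨Finset.disjoint_coe.mpr hdisj, hbip⟩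
  have hunmixed : IsUnmixed G := hunmixed
  have hXmin := hG.isMinimalVertexCover_left fun x _ => hnoiso x
  have hYmin := hG.symm.isMinimalVertexCover_left fun y _ => hnoiso y
  refine ⟨hunmixed X Y hXmin hYmin,
    SimpleGraph.exists_isPerfectMatching_of_forall_ncard_le hG ?_⟩
  have hXY : (X ∪ Y : Set V) = Set.univ := by rw [← Finset.coe_union, hcover, Finset.coe_univ]
  refine hG.forall_ncard_le_ncard_iUnion_neighborSet hXY ?_ ?_
  · exact hG.ncard_le_ncard_iUnion_neighborSet_left fun _ => hunmixed.card_le_card hXmin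
  · exact hG.symm.ncard_le_ncard_iUnion_neighborSet_left fun _ => hunmixed.card_le_card hYmin
end

section
/- Let G be an unmixed bipartite graph on vertex set {x₁,...,x_n} ∪ {y₁,...,y_n} with {x_i,y_i} ∈ E(G) for all i. Then every minimal vertex cover C of G has the form {x_i : i ∈ A} ∪ {y_j : j ∉ A} for some subset A ⊆ {1,...,n}; in particular |C| = n and C contains exactly one of x_i, y_i for each i. -/
open Finset

theorem IsMinimalVertexCover.of_forall_exists_adj_notMem {V : Type*} {G : SimpleGraph V}
    {C : Finset V} (hC : IsVertexCover G C) (hpriv : ∀ v ∈ C, ∃ w ∉ C, G.Adj v w) :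
    IsMinimalVertexCover G C := by
  refine ⟨hC, fun C' hC'C hC' => ?_⟩
  obtain ⟨v, hvC, hvC'⟩ := exists_of_ssubset hC'C
  obtain ⟨w, hwC, hvw⟩ := hpriv v hvC
  exact (hC' v w hvw).elim hvC' fun hwC' => hwC (hC'C.subset hwC')

theorem isMinimalVertexCover_univ_map_inl {α β : Type*} [Fintype α] {G : SimpleGraph (α ⊕ β)}
    (hnoAdjRight : ∀ i j : β, ¬ G.Adj (.inr i) (.inr j))
    (hleftAdjRight : ∀ i : α, ∃ j : β, G.Adj (.inl i) (.inr j)) :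
    IsMinimalVertexCover G (univ.map .inl) := by
  refine .of_forall_exists_adj_notMem ?_ ?_
  · rintro (i | i) (j | j) hij
    · exact .inl (by simp)
    · exact .inl (by simp)
    · exact .inr (by simp)
    · exact (hnoAdjRight i j hij).elim
  · simp only [mem_map, mem_univ, true_and, Function.Embedding.inl_apply,
      forall_exists_index, forall_apply_eq_imp_iff]
    intro i
    obtain ⟨j, hij⟩ := hleftAdjRight i
    exact ⟨.inr j, by simp, hij⟩

theorem Finset.eq_disjSum_compl_toLeft {α : Type*} [Fintype α] [DecidableEq α]
    (u : Finset (α ⊕ α)) (hmeet : ∀ i, .inl i ∈ u ∨ .inr i ∈ u) (hcard : #u ≤ Fintype.card α) :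
    u = u.toLeft.disjSum u.toLeftᶜ := by
  have hunion : u.toRight ∪ u.toLeft = univ :=
    eq_univ_of_forall fun i => by simpa [or_comm] using hmeet i
  have hdisj : Disjoint u.toRight u.toLeft := by
    rw [← card_union_eq_card_add_card]
    refine le_antisymm (card_union_le _ _) ?_
    rw [hunion, card_univ, add_comm, card_toLeft_add_card_toRight]
    exact hcard
  have hcompl : u.toRight = u.toLeftᶜ :=
    IsCompl.eq_compl ⟨hdisj, codisjoint_iff.mpr hunion⟩
  rw [← hcompl, toLeft_disjSum_toRight]

theorem Finset.disjSum_eq_image_inl_union_image_inr {α β : Type*} [DecidableEq α] [DecidableEq β]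
    (s : Finset α) (t : Finset β) : s.disjSum t = s.image .inl ∪ t.image .inr := by
  ext (a | b) <;> simp

theorem stmt14_general {n : ℕ} (G : SimpleGraph (Fin n ⊕ Fin n))
    (hbipY : ∀ i j : Fin n, ¬ G.Adj (Sum.inr i) (Sum.inr j))
    (hmatch : ∀ i : Fin n, G.Adj (Sum.inl i) (Sum.inr i))
    (hunmixed : ∀ C C' : Finset (Fin n ⊕ Fin n),
      IsMinimalVertexCover G C → IsMinimalVertexCover G C' → C.card = C'.card)
    (C : Finset (Fin n ⊕ Fin n)) (hC : IsMinimalVertexCover G C) :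
    (∃ A : Finset (Fin n), C = A.image Sum.inl ∪ Aᶜ.image Sum.inr) ∧
    C.card = n ∧ ∀ i : Fin n, (Sum.inl i ∈ C ↔ Sum.inr i ∉ C) := by
  have hX := isMinimalVertexCover_univ_map_inl hbipY fun i => ⟨i, hmatch i⟩
  have hcard : C.card = n := by simpa using hunmixed C _ hC hX
  have hsplit : C = C.toLeft.disjSum C.toLeftᶜ :=
    C.eq_disjSum_compl_toLeft (fun i => hC.1 _ _ (hmatch i)) (by simp [hcard])
  refine ⟨⟨C.toLeft, hsplit.trans (disjSum_eq_image_inl_union_image_inr _ _)⟩, hcard, fun i => ?_⟩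
  rw [hsplit]
  simp

/-- Let `G` be an unmixed bipartite graph on `{x₁,...,xₙ} ∪ {y₁,...,yₙ}`
(encoded as `Fin n ⊕ Fin n`, `xᵢ = inl i`, `yᵢ = inr i`) with `{xᵢ, yᵢ}` an edge for
all `i`. Then every minimal vertex cover `C` has the form
`{xᵢ : i ∈ A} ∪ {yⱼ : j ∉ A}` for some `A ⊆ {1,...,n}`; in particular `|C| = n` and
`C` contains exactly one of `xᵢ, yᵢ` for each `i`. -/
theorem stmt14 {n : ℕ} (G : SimpleGraph (Fin n ⊕ Fin n))
    (hbipX : ∀ i j : Fin n, ¬ G.Adj (Sum.inl i) (Sum.inl j))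
    (hbipY : ∀ i j : Fin n, ¬ G.Adj (Sum.inr i) (Sum.inr j))
    (hmatch : ∀ i : Fin n, G.Adj (Sum.inl i) (Sum.inr i))
    (hunmixed : ∀ C C' : Finset (Fin n ⊕ Fin n),
      IsMinimalVertexCover G C → IsMinimalVertexCover G C' → C.card = C'.card)
    (C : Finset (Fin n ⊕ Fin n)) (hC : IsMinimalVertexCover G C) :
    (∃ A : Finset (Fin n), C = A.image Sum.inl ∪ Aᶜ.image Sum.inr) ∧
    C.card = n ∧ ∀ i : Fin n, (Sum.inl i ∈ C ↔ Sum.inr i ∉ C) :=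
  stmt14_general G hbipY hmatch hunmixed C hC
end

section
/- Let G be an unmixed bipartite graph on vertex set {x₁,...,x_n} ∪ {y₁,...,y_n} with {x_i,y_i} ∈ E(G) for all i. For a minimal vertex cover C, let C̄ = {i : x_i ∈ C}. Then the collection L_G = {C̄ : C a minimal vertex cover of G} is closed under unions and intersections, i.e., it is a sublattice of the Boolean lattice on {1,...,n}; moreover ∅ ∈ L_G and {1,...,n} ∈ L_G. -/
/-- Let `G` be an unmixed bipartite graph on `{x₁,...,xₙ} ∪ {y₁,...,yₙ}`
(encoded as `Fin n ⊕ Fin n`) with `{xᵢ, yᵢ}` an edge for all `i`. For a minimal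
vertex cover `C` set `C̄ = {i : xᵢ ∈ C}`. Then the collection
`L_G = {C̄ : C a minimal vertex cover}` is closed under unions and intersections,
and contains `∅` and `{1,...,n}`. -/
theorem stmt15 {n : ℕ} (G : SimpleGraph (Fin n ⊕ Fin n))
    (hbipX : ∀ i j : Fin n, ¬ G.Adj (Sum.inl i) (Sum.inl j))
    (hbipY : ∀ i j : Fin n, ¬ G.Adj (Sum.inr i) (Sum.inr j))
    (hmatch : ∀ i : Fin n, G.Adj (Sum.inl i) (Sum.inr i))
    (hunmixed : ∀ C C' : Finset (Fin n ⊕ Fin n),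
      IsMinimalVertexCover G C → IsMinimalVertexCover G C' → C.card = C'.card)
    (LG : Set (Finset (Fin n)))
    (hLG : ∀ A : Finset (Fin n), A ∈ LG ↔
      ∃ C : Finset (Fin n ⊕ Fin n), IsMinimalVertexCover G C ∧
        A = Finset.univ.filter (fun i => Sum.inl i ∈ C)) :
    (∀ A ∈ LG, ∀ B ∈ LG, A ∪ B ∈ LG ∧ A ∩ B ∈ LG) ∧
    (∅ : Finset (Fin n)) ∈ LG ∧ (Finset.univ : Finset (Fin n)) ∈ LG := by
  classical
  set X : Finset (Fin n ⊕ Fin n) := Finset.univ.image Sum.inl with hX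
  have hXmem : ∀ v : Fin n ⊕ Fin n, v ∈ X ↔ ∃ i, Sum.inl i = v := by
    intro v; simp [hX]
  have hXcover : IsVertexCover G X := by
    intro a b hab
    match a, b with
    | Sum.inl i, _ => exact Or.inl ((hXmem _).2 ⟨i, rfl⟩)
    | Sum.inr i, Sum.inl j => exact Or.inr ((hXmem _).2 ⟨j, rfl⟩)
    | Sum.inr i, Sum.inr j => exact absurd hab (hbipY i j)
  have hXmin : IsMinimalVertexCover G X := by
    refine ⟨hXcover, ?_⟩
    intro C' hC' hcov
    obtain ⟨v, hvX, hvC'⟩ := Finset.exists_of_ssubset hC'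
    obtain ⟨i, rfl⟩ := (hXmem v).1 hvX
    rcases hcov _ _ (hmatch i) with h | h
    · exact hvC' h
    · obtain ⟨j, hj⟩ := (hXmem _).1 (hC'.subset h)
      exact Sum.inl_ne_inr hj
  have hXcard : X.card = n := by
    rw [hX, Finset.card_image_of_injective _ Sum.inl_injective, Finset.card_univ,
      Fintype.card_fin]
  -- every minimal vertex cover contains exactly one vertex of each matched pair
  have key : ∀ C : Finset (Fin n ⊕ Fin n), IsMinimalVertexCover G C →
      ∀ i : Fin n, (Sum.inl i ∈ C ↔ Sum.inr i ∉ C) := by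
    intro C hC i
    have hcard : C.card = n := (hunmixed C X hC hXmin).trans hXcard
    have hone : ∀ j : Fin n, Sum.inl j ∈ C ∨ Sum.inr j ∈ C :=
      fun j => hC.1 _ _ (hmatch j)
    set idx : Fin n ⊕ Fin n → Fin n := Sum.elim id id with hidx
    have himg : C.image idx = Finset.univ := by
      apply Finset.eq_univ_of_forall
      intro j
      rcases hone j with h | h
      · exact Finset.mem_image.2 ⟨_, h, rfl⟩
      · exact Finset.mem_image.2 ⟨_, h, rfl⟩
    have hinj : Set.InjOn idx C := by
      rw [← Finset.card_image_iff, himg, Finset.card_univ, Fintype.card_fin, hcard]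
    constructor
    · intro h1 h2
      have := hinj (by simpa using h1) (by simpa using h2) (by simp [hidx])
      exact Sum.inl_ne_inr this
    · intro h2
      rcases hone i with h | h
      · exact h
      · exact absurd h h2
  -- building a minimal vertex cover from a set of indices
  let D : Finset (Fin n) → Finset (Fin n ⊕ Fin n) := fun A =>
    Finset.univ.filter (fun v => Sum.elim (· ∈ A) (· ∉ A) v)
  have hDl : ∀ A (i : Fin n), Sum.inl i ∈ D A ↔ i ∈ A := by
    intro A i; simp [D]
  have hDr : ∀ A (i : Fin n), Sum.inr i ∈ D A ↔ i ∉ A := by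
    intro A i; simp [D]
  have hDmin : ∀ A : Finset (Fin n), IsVertexCover G (D A) →
      IsMinimalVertexCover G (D A) := by
    intro A hcov
    refine ⟨hcov, ?_⟩
    intro C' hC' hcov'
    obtain ⟨v, hvD, hvC'⟩ := Finset.exists_of_ssubset hC'
    match v with
    | Sum.inl i =>
      have hi : i ∈ A := (hDl A i).1 hvD
      rcases hcov' _ _ (hmatch i) with h | h
      · exact hvC' h
      · exact ((hDr A i).1 (hC'.subset h)) hi
    | Sum.inr i =>
      have hi : i ∉ A := (hDr A i).1 hvD
      rcases hcov' _ _ (hmatch i).symm with h | h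
      · exact hvC' h
      · exact hi ((hDl A i).1 (hC'.subset h))
  have hDfilter : ∀ A : Finset (Fin n),
      A = Finset.univ.filter (fun i => Sum.inl i ∈ D A) := by
    intro A; ext i; simp [hDl]
  -- membership criterion for LG via D
  have hLGD : ∀ A : Finset (Fin n), IsVertexCover G (D A) → A ∈ LG := by
    intro A hcov
    exact (hLG A).2 ⟨D A, hDmin A hcov, hDfilter A⟩
  -- main cover lemma
  have hedge : ∀ A : Finset (Fin n), A ∈ LG →
      ∀ i j : Fin n, G.Adj (Sum.inl i) (Sum.inr j) → i ∈ A ∨ j ∉ A := by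
    intro A hA i j hadj
    obtain ⟨C, hC, rfl⟩ := (hLG A).1 hA
    rcases hC.1 _ _ hadj with h | h
    · left; simp [h]
    · right; intro hj; simp only [Finset.mem_filter] at hj; exact (key C hC j).1 hj.2 h
  constructor
  · intro A hA B hB
    constructor
    · apply hLGD
      intro a b hab
      match a, b with
      | Sum.inl i, Sum.inl j => exact absurd hab (hbipX i j)
      | Sum.inr i, Sum.inr j => exact absurd hab (hbipY i j)
      | Sum.inl i, Sum.inr j =>
        rw [hDl, hDr]
        rcases hedge A hA i j hab with h | h
        · left; exact Finset.mem_union_left _ h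
        · rcases hedge B hB i j hab with h' | h'
          · left; exact Finset.mem_union_right _ h'
          · right; simp [h, h']
      | Sum.inr j, Sum.inl i =>
        rw [hDl, hDr]
        rcases hedge A hA i j hab.symm with h | h
        · right; exact Finset.mem_union_left _ h
        · rcases hedge B hB i j hab.symm with h' | h'
          · right; exact Finset.mem_union_right _ h'
          · left; simp [h, h']
    · apply hLGD
      intro a b hab
      match a, b with
      | Sum.inl i, Sum.inl j => exact absurd hab (hbipX i j)
      | Sum.inr i, Sum.inr j => exact absurd hab (hbipY i j)
      | Sum.inl i, Sum.inr j =>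
        rw [hDl, hDr]
        rcases hedge A hA i j hab with h | h
        · rcases hedge B hB i j hab with h' | h'
          · left; exact Finset.mem_inter.2 ⟨h, h'⟩
          · right; simp [h']
        · right; simp [h]
      | Sum.inr j, Sum.inl i =>
        rw [hDl, hDr]
        rcases hedge A hA i j hab.symm with h | h
        · rcases hedge B hB i j hab.symm with h' | h'
          · right; exact Finset.mem_inter.2 ⟨h, h'⟩
          · left; simp [h']
        · left; simp [h]
  constructor
  · apply hLGD
    intro a b hab
    match a, b with
    | Sum.inl i, Sum.inl j => exact absurd hab (hbipX i j)
    | Sum.inr i, Sum.inr j => exact absurd hab (hbipY i j)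
    | Sum.inl i, Sum.inr j => right; rw [hDr]; simp
    | Sum.inr j, Sum.inl i => left; rw [hDr]; simp
  · apply hLGD
    intro a b hab
    match a, b with
    | Sum.inl i, Sum.inl j => exact absurd hab (hbipX i j)
    | Sum.inr i, Sum.inr j => exact absurd hab (hbipY i j)
    | Sum.inl i, Sum.inr j => left; rw [hDl]; simp
    | Sum.inr j, Sum.inl i => right; rw [hDl]; simp
end

section
/- Let R = k[x₁,...,x_n] and I a monomial ideal such that R/I is Cohen–Macaulay. If β_{i,b}(R/I) is a nonzero multigraded extremal Betti number, then i = pd(R/I), the projective dimension of R/I. -/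
open MvPolynomial

private lemma stmt17_sum_pos {n : ℕ} {c : Fin n →₀ ℕ} (h : c ≠ 0) :
    0 < c.sum fun _ v => v := by
  obtain ⟨a, ha⟩ := Finsupp.ne_iff.mp h
  simp only [Finsupp.coe_zero, Pi.zero_apply] at ha
  have hmem : a ∈ c.support := Finsupp.mem_support_iff.mpr ha
  calc 0 < c a := Nat.pos_of_ne_zero ha
    _ ≤ c.sum fun _ v => v := Finset.single_le_sum (fun _ _ => Nat.zero_le _) hmem

private lemma stmt17_sum_lt {n : ℕ} {b c : Fin n →₀ ℕ} (h : b < c) :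
    (b.sum fun _ v => v) < c.sum fun _ v => v := by
  have hle : b ≤ c := le_of_lt h
  have hsub : b + (c - b) = c := by
    ext a
    have := Finsupp.le_def.mp hle a
    simp only [Finsupp.add_apply, Finsupp.tsub_apply]
    omega
  have hne : c - b ≠ 0 := by
    intro h0
    exact h.ne (by rw [← hsub, h0, add_zero])
  have hpos := stmt17_sum_pos hne
  have hadd : ((b + (c - b)).sum fun _ v => v)
      = (b.sum fun _ v => v) + ((c - b).sum fun _ v => v) :=
    Finsupp.sum_add_index' (fun _ => rfl) (fun _ _ _ => rfl)
  rw [← hsub, hadd]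
  omega

/-- Let `R = k[x₁,...,xₙ]` and `I` a monomial ideal such that `R/I` is
Cohen–Macaulay. If `β_{i,b}(R/I)` is a nonzero multigraded extremal Betti number,
then `i = pd(R/I)`.

Encoding: the minimal multigraded free resolution of `R/I` is given by the data
`(F, mdeg, d, ε)`: `F j` indexes a basis of the `j`-th free module `F j →₀ R`, with
multidegrees `mdeg j`; the maps `d j` form an exact complex augmenting via `ε` onto
`R/I`; the maps are multihomogeneous and minimal (each matrix entry is a scalar
multiple of the monomial of multidegree `mdeg (j+1) g - mdeg j e`, and a nonzero
entry forces a strict drop of multidegree).  Thus the multigraded Betti number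
`β_{j,c}(R/I)` equals the number of basis elements of `F j` of multidegree `c`, and
`pd(R/I) = r`, the largest index with `F r` nonempty.  Cohen–Macaulayness is encoded
by the equivalent condition `Ext^j_R(R/I, R) = 0` for all `j < r = pd(R/I)`, phrased
as exactness of the dualized complex in all positions `< r`.  Extremality of
`β_{i,b} ≠ 0` means: `β_{j,c} = 0` for all `j ≥ i` and all multidegrees `c > b` with
`|c| - |b| ≥ j - i`. -/
theorem stmt17 {k : Type*} [Field k] {n : ℕ}
    (I : Ideal (MvPolynomial (Fin n) k))
    (hmono : ∃ S : Set (Fin n →₀ ℕ),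
      I = Ideal.span ((fun s => (monomial s (1 : k))) '' S))
    (F : ℕ → Type) [∀ i, Fintype (F i)]
    (mdeg : ∀ i, F i → (Fin n →₀ ℕ))
    (d : ∀ i, (F (i + 1) →₀ MvPolynomial (Fin n) k)
      →ₗ[MvPolynomial (Fin n) k] (F i →₀ MvPolynomial (Fin n) k))
    (ε : (F 0 →₀ MvPolynomial (Fin n) k)
      →ₗ[MvPolynomial (Fin n) k] (MvPolynomial (Fin n) k ⧸ I))
    (hεsurj : Function.Surjective ε)
    (hexact₀ : LinearMap.ker ε = LinearMap.range (d 0))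
    (hexact : ∀ i, LinearMap.ker (d i) = LinearMap.range (d (i + 1)))
    (hmin : ∀ (i : ℕ) (g : F (i + 1)) (e : F i),
      (d i (Finsupp.single g 1)) e ≠ 0 →
        mdeg i e < mdeg (i + 1) g ∧
        ∃ c : k, (d i (Finsupp.single g 1)) e = c • monomial (mdeg (i + 1) g - mdeg i e) 1)
    (r : ℕ) (hr : Nonempty (F r)) (hr' : ∀ j, r < j → IsEmpty (F j))
    (hCM₀ : 0 < r → LinearMap.ker (d 0).dualMap = ⊥)
    (hCM : ∀ j, j + 1 < r →
      LinearMap.ker (d (j + 1)).dualMap ≤ LinearMap.range (d j).dualMap)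
    (i : ℕ) (b : Fin n →₀ ℕ)
    (hnonzero : ∃ e : F i, mdeg i e = b)
    (hextremal : ∀ (j : ℕ) (e : F j), i ≤ j → b < mdeg j e →
      j - i ≤ ((mdeg j e).sum fun _ v => v) - (b.sum fun _ v => v) → False) :
    i = r := by
  classical
  obtain ⟨e₀, he₀⟩ := hnonzero
  rcases lt_trichotomy i r with hlt | heq | hgt
  · exfalso
    -- the dual basis element at e₀ is killed by the dual of d i
    have hentry : ∀ g : F (i + 1), (d i (Finsupp.single g 1)) e₀ = 0 := by
      intro g
      by_contra hne
      obtain ⟨hltm, -⟩ := hmin i g e₀ hne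
      rw [he₀] at hltm
      have hsum := stmt17_sum_lt hltm
      exact hextremal (i + 1) g (by omega) hltm (by omega)
    have hker : (d i).dualMap (Finsupp.lapply e₀) = 0 := by
      apply Finsupp.lhom_ext
      intro g p
      have hsingle : Finsupp.single g p = p • Finsupp.single g (1 : MvPolynomial (Fin n) k) := by
        rw [Finsupp.smul_single', mul_one]
      rw [LinearMap.dualMap_apply, hsingle, map_smul]
      simp only [Finsupp.lapply_apply, Finsupp.smul_apply, hentry g, smul_zero,
        LinearMap.zero_apply]
    have hmem : Finsupp.lapply e₀ ∈ LinearMap.ker (d i).dualMap :=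
      LinearMap.mem_ker.mpr hker
    cases i with
    | zero =>
      rw [hCM₀ hlt, Submodule.mem_bot] at hmem
      have h1 : (Finsupp.lapply e₀ : (F 0 →₀ MvPolynomial (Fin n) k)
          →ₗ[MvPolynomial (Fin n) k] MvPolynomial (Fin n) k)
          (Finsupp.single e₀ 1) = 1 := by
        simp [Finsupp.lapply_apply]
      rw [hmem] at h1
      simp only [LinearMap.zero_apply] at h1
      exact one_ne_zero h1.symm
    | succ j =>
      obtain ⟨ψ, hψ⟩ := hCM j hlt hmem
      have h1 : ψ (d j (Finsupp.single e₀ 1)) = 1 := by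
        have := LinearMap.congr_fun hψ (Finsupp.single e₀ 1)
        rwa [LinearMap.dualMap_apply, Finsupp.lapply_apply, Finsupp.single_eq_same] at this
      set v := d j (Finsupp.single e₀ 1) with hv
      have hcc : ∀ f : F j, constantCoeff (v f) = 0 := by
        intro f
        by_cases hf : v f = 0
        · rw [hf, map_zero]
        · obtain ⟨hltm, c, hc⟩ := hmin j e₀ f hf
          have hm : mdeg (j + 1) e₀ - mdeg j f ≠ 0 := by
            intro h0
            exact absurd (tsub_eq_zero_iff_le.mp h0) (not_le_of_gt hltm)
          rw [← hv] at hc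
          rw [hc]
          simp [MvPolynomial.smul_eq_C_mul, constantCoeff_monomial, hm]
      have hrep : ψ v = v.sum fun f a => a * ψ (Finsupp.single f 1) := by
        conv_lhs => rw [← Finsupp.sum_single v]
        rw [map_finsuppSum]
        refine Finset.sum_congr rfl fun f _ => ?_
        show ψ (Finsupp.single f (v f)) = v f * ψ (Finsupp.single f 1)
        have : Finsupp.single f (v f)
            = v f • Finsupp.single f (1 : MvPolynomial (Fin n) k) := by
          rw [Finsupp.smul_single', mul_one]
        rw [this, map_smul, smul_eq_mul]
      have h2 : constantCoeff (ψ v) = 0 := by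
        rw [hrep, map_finsuppSum]
        refine Finset.sum_eq_zero fun f _ => ?_
        show constantCoeff (v f * ψ (Finsupp.single f 1)) = 0
        rw [map_mul, hcc f, zero_mul]
      rw [h1, map_one] at h2
      exact one_ne_zero h2
  · exact heq
  · exact ((hr' i hgt).false e₀).elim
end
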